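/- arXiv:1405.5113 — 4 statements merged into one kernel-verified Lean document; each statement's English description precedes it below -/
import Mathlib

section
/- Let B be a real m×m matrix and A, a diagonalizable m×m matrix (more generally any matrix), with tA and tB not necessarily commuting. Then for all t ≥ 0, the matrix exponential satisfies the Duhamel-type commutator identity: exp(t(A+B)) = exp(tB)·exp(tA) − ∫₀ᵗ exp((t−s)(A+B))·(exp(sB)·A − A·exp(sB))·exp(sA) ds. -/
/-!
Put `g s = exp ((t - s) • (A + B)) * exp (s • B) * exp (s • A)`, so that `g 0 = exp (t • (A + B))`
and `g t = exp (t • B) * exp (t • A)`. Since `A + B` commutes with `exp ((t - s) • (A + B))` and `A`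
with `exp (s • A)`, the derivative of `g` collapses to the integrand, and the identity is the fundamental theorem of calculus on `[0, t]`, read entrywise for matrices.
-/

open MeasureTheory intervalIntegral

section BanachAlgebra

open NormedSpace

variable {𝔸 : Type*} [NormedRing 𝔸] [NormedAlgebra ℝ 𝔸]

noncomputable def duhamelIntegrand (A B : 𝔸) (t s : ℝ) : 𝔸 :=
  exp ((t - s) • (A + B)) * (exp (s • B) * A - A * exp (s • B)) * exp (s • A)

variable [CompleteSpace 𝔸]

theorem continuous_exp_smul (x : 𝔸) : Continuous fun u : ℝ => exp (u • x) :=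
  (differentiable_exp_smul_const ℝ x).continuous

theorem continuous_duhamelIntegrand (A B : 𝔸) (t : ℝ) : Continuous (duhamelIntegrand A B t) :=
  (((continuous_exp_smul _).comp (continuous_sub_left t)).mul
    (((continuous_exp_smul B).mul continuous_const).sub
      (continuous_const.mul (continuous_exp_smul B)))).mul (continuous_exp_smul A)

theorem hasDerivAt_exp_sub_smul (x : 𝔸) (t s : ℝ) :
    HasDerivAt (fun u : ℝ => exp ((t - u) • x)) (-(x * exp ((t - s) • x))) s := by
  simpa [Function.comp_def] using
    (hasDerivAt_exp_smul_const' (𝕂 := ℝ) x (t - s)).scomp s ((hasDerivAt_id s).const_sub t)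

theorem hasDerivAt_exp_sub_smul_add_mul_exp_smul_mul_exp_smul (A B : 𝔸) (t s : ℝ) :
    HasDerivAt (fun u : ℝ => exp ((t - u) • (A + B)) * exp (u • B) * exp (u • A))
      (duhamelIntegrand A B t s) s := by
  refine (((hasDerivAt_exp_sub_smul (A + B) t s).mul
    (hasDerivAt_exp_smul_const' B s)).mul (hasDerivAt_exp_smul_const A s)).congr_deriv ?_
  have hA : exp (s • A) * A = A * exp (s • A) :=
    ((Commute.refl A).smul_left s).exp_left.eq
  have hC : (A + B) * exp ((t - s) • (A + B)) = exp ((t - s) • (A + B)) * (A + B) :=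
    ((Commute.refl (A + B)).smul_right (t - s)).exp_right.eq
  simp only [duhamelIntegrand, Pi.mul_apply, hA, neg_mul, hC]
  noncomm_ring

theorem exp_smul_add_eq_sub_integral_duhamelIntegrand (A B : 𝔸) (t : ℝ) :
    exp (t • (A + B)) = exp (t • B) * exp (t • A) - ∫ s in (0 : ℝ)..t, duhamelIntegrand A B t s := by
  rw [integral_eq_sub_of_hasDerivAt
    (fun s _ => hasDerivAt_exp_sub_smul_add_mul_exp_smul_mul_exp_smul A B t s)
    ((continuous_duhamelIntegrand A B t).intervalIntegrable _ _)]
  simp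

end BanachAlgebra

attribute [local instance] Matrix.linftyOpNormedRing Matrix.linftyOpNormedAlgebra in
theorem duhamel_commutator_matrix_exp_general (m : ℕ) (A B : Matrix (Fin m) (Fin m) ℝ)
    (t : ℝ) :
    NormedSpace.exp (t • (A + B)) =
      NormedSpace.exp (t • B) * NormedSpace.exp (t • A) -
        Matrix.of (fun i j =>
          ∫ s in (0:ℝ)..t,
            ((NormedSpace.exp ((t - s) • (A + B)) *
                (NormedSpace.exp (s • B) * A - A * NormedSpace.exp (s • B)) *
                NormedSpace.exp (s • A)) i j)) := by
  refine (exp_smul_add_eq_sub_integral_duhamelIntegrand A B t).trans (congrArg _ ?_)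
  ext i j
  exact ((Matrix.entryLinearMap ℝ ℝ i j).toContinuousLinearMap.intervalIntegral_comp_comm
    ((continuous_duhamelIntegrand A B t).intervalIntegrable _ _)).symm

theorem duhamel_commutator_matrix_exp (m : ℕ) (A B : Matrix (Fin m) (Fin m) ℝ)
    (t : ℝ) (ht : 0 ≤ t) :
    NormedSpace.exp (t • (A + B)) =
      NormedSpace.exp (t • B) * NormedSpace.exp (t • A) -
        Matrix.of (fun i j =>
          ∫ s in (0:ℝ)..t,
            ((NormedSpace.exp ((t - s) • (A + B)) *
                (NormedSpace.exp (s • B) * A - A * NormedSpace.exp (s • B)) *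
                NormedSpace.exp (s • A)) i j)) :=
  duhamel_commutator_matrix_exp_general m A B t
end

section
/- Let B be an m×m real matrix with all off-diagonal entries nonnegative, and let u : [0,T] → ℝᵐ be differentiable with u'(t) = B u(t) for all t and u(0) ≤ 0 componentwise. Then u(t) ≤ 0 componentwise for all t ∈ [0,T]. -/
/-!
The solution is `u t = exp (t • B) *ᵥ u 0` by uniqueness for the linear ODE, so it suffices that
`exp (t • B)` is entrywise nonnegative for `t ≥ 0`. Adding `c • 1` with `c` large makes a cooperative
matrix entrywise nonnegative, whence its exponential series has nonnegative terms, and the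
commuting scalar shift only multiplies the exponential by `Real.exp (-c) > 0`.
-/

open NormedSpace Set

attribute [local instance] Matrix.linftyOpNormedRing Matrix.linftyOpNormedAlgebra

namespace Matrix

variable {n : Type*} [Fintype n] [DecidableEq n]

theorem exp_apply_nonneg {A : Matrix n n ℝ} (hA : ∀ i j, 0 ≤ A i j) (i j : n) :
    0 ≤ exp A i j := by
  have hs := expSeries_summable' (𝕂 := ℝ) A
  rw [congrFun (exp_eq_tsum ℝ) A]
  -- `erw`: a matrix is a function of two indices only up to unfolding `Matrix`
  erw [tsum_apply hs, tsum_apply (Pi.summable.mp hs i)]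
  exact tsum_nonneg fun k => mul_nonneg (by positivity) (pow_apply_nonneg hA k i j)

theorem exp_smul_one (r : ℝ) : exp (r • (1 : Matrix n n ℝ)) = Real.exp r • 1 := by
  have h := algebraMap_exp_comm (𝔸 := Matrix n n ℝ) r
  rw [Algebra.algebraMap_eq_smul_one, Algebra.algebraMap_eq_smul_one] at h
  rw [Real.exp_eq_exp_ℝ]
  exact h.symm

theorem exp_apply_nonneg_of_offDiag_nonneg {B : Matrix n n ℝ}
    (hB : ∀ i j, i ≠ j → 0 ≤ B i j) (i j : n) : 0 ≤ exp B i j := by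
  set c := ∑ k, |B k k|
  set A := B + c • 1
  have hA : ∀ i j, 0 ≤ A i j := by
    intro i j
    rcases eq_or_ne i j with rfl | hij
    · have : |B i i| ≤ c := Finset.single_le_sum (fun k _ => abs_nonneg (B k k)) (Finset.mem_univ i)
      simp only [A, add_apply, smul_apply, one_apply_eq, smul_eq_mul, mul_one]
      linarith [neg_abs_le (B i i)]
    · simpa [A, one_apply_ne hij] using hB i j hij
  have hexp : exp B = Real.exp (-c) • exp A := by
    have hcomm : Commute A ((-c) • (1 : Matrix n n ℝ)) := (Commute.one_right A).smul_right _
    rw [show B = A + (-c) • 1 by simp [A], exp_add_of_commute _ _ hcomm, exp_smul_one,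
      mul_smul_comm, mul_one]
  rw [hexp, smul_apply, smul_eq_mul]
  exact mul_nonneg (Real.exp_pos _).le (exp_apply_nonneg hA i j)

theorem hasDerivAt_exp_smul_mulVec (B : Matrix n n ℝ) (v : n → ℝ) (t : ℝ) :
    HasDerivAt (fun s : ℝ => exp (s • B) *ᵥ v) (B *ᵥ (exp (t • B) *ᵥ v)) t := by
  let L := ((mulVecBilin ℝ ℝ (m := n) (n := n) (A := ℝ)).flip v).toContinuousLinearMap
  rw [mulVec_mulVec]
  exact L.hasFDerivAt.comp_hasDerivAt t (hasDerivAt_exp_smul_const' B t)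

theorem eqOn_exp_smul_mulVec_of_hasDerivAt {B : Matrix n n ℝ} {u : ℝ → n → ℝ} {T : ℝ}
    (hu : ∀ t ∈ Icc 0 T, HasDerivAt u (B *ᵥ u t) t) :
    EqOn u (fun t => exp (t • B) *ᵥ u 0) (Icc 0 T) := by
  refine ODE_solution_unique (v := fun _ => B.mulVecLin.toContinuousLinearMap)
    (fun _ => ContinuousLinearMap.lipschitz _)
    (fun t ht => (hu t ht).continuousAt.continuousWithinAt)
    (fun t ht => (hu t (Ico_subset_Icc_self ht)).hasDerivWithinAt)
    (fun t _ => (hasDerivAt_exp_smul_mulVec B _ t).continuousAt.continuousWithinAt)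
    (fun t _ => (hasDerivAt_exp_smul_mulVec B _ t).hasDerivWithinAt) ?_
  simp

end Matrix

theorem cooperative_linear_comparison_general (m : ℕ) (T : ℝ)
    (B : Matrix (Fin m) (Fin m) ℝ) (hB : ∀ i j, i ≠ j → 0 ≤ B i j)
    (u : ℝ → (Fin m → ℝ))
    (hu : ∀ t ∈ Set.Icc (0:ℝ) T, HasDerivAt u (B.mulVec (u t)) t)
    (h0 : ∀ i, u 0 i ≤ 0) :
    ∀ t ∈ Set.Icc (0:ℝ) T, ∀ i, u t i ≤ 0 := by
  intro t ht i
  have htB : ∀ i j, i ≠ j → 0 ≤ (t • B) i j := fun i j hij => mul_nonneg ht.1 (hB i j hij)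
  rw [Matrix.eqOn_exp_smul_mulVec_of_hasDerivAt hu ht]
  dsimp only [Matrix.mulVec, dotProduct]
  exact Finset.sum_nonpos fun j _ =>
    mul_nonpos_of_nonneg_of_nonpos (Matrix.exp_apply_nonneg_of_offDiag_nonneg htB i j) (h0 j)

theorem cooperative_linear_comparison (m : ℕ) (T : ℝ) (hT : 0 ≤ T)
    (B : Matrix (Fin m) (Fin m) ℝ) (hB : ∀ i j, i ≠ j → 0 ≤ B i j)
    (u : ℝ → (Fin m → ℝ))
    (hu : ∀ t ∈ Set.Icc (0:ℝ) T, HasDerivAt u (B.mulVec (u t)) t)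
    (h0 : ∀ i, u 0 i ≤ 0) :
    ∀ t ∈ Set.Icc (0:ℝ) T, ∀ i, u t i ≤ 0 :=
  cooperative_linear_comparison_general m T B hB u hu h0
end

section
/- Let m ≥ 1, let α₁ ≥ α₂ ≥ … ≥ α_m with α_i ∈ (0,1], let B be a real m×m matrix, and for z ∈ ℂ with 0 ≤ arg(z) < π/(4α₁) let A(z) = diag(−z^{2α₁}, …, −z^{2α_m}) (principal branch powers). Then for every t ≥ 0, the operator norm satisfies ‖exp(t(A(z)+B))‖ ≤ e^{(‖B‖ − |z|^{2α₁} cos(2α₁ arg z)) t} + e^{(‖B‖ − |z|^{2α_m} cos(2α₁ arg z)) t}. -/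
/-!
Let `A = diag(-z^{2α_i})`. Since `α_m ≤ α_i ≤ α₁`, the modulus `|z|^{2α_i}` lies between
`|z|^{2α_m}` and `|z|^{2α₁}`, and `0 ≤ 2α_i arg z ≤ 2α₁ arg z < π/2`, so every `Re z^{2α_i}` is at
least `κ = min (|z|^{2α_m}, |z|^{2α₁}) cos (2α₁ arg z)`. Hence `Re ⟪(A + B) w, w⟫ ≤ (‖B‖ - κ) ‖w‖²`,
and Gronwall's inequality for `‖w‖²` along `w' = (A + B) w` gives
`‖exp (t (A + B))‖ ≤ exp ((‖B‖ - κ) t)`, which is one of the two exponentials on the right.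
-/

open scoped Matrix.Norms.L2Operator
open NormedSpace Matrix WithLp

section Dissipative

variable {E : Type*} [NormedAddCommGroup E] [InnerProductSpace ℂ E]

theorem re_inner_le_opNorm_mul_sq (T : E →L[ℂ] E) (x : E) :
    (inner ℂ (T x) x).re ≤ ‖T‖ * ‖x‖ ^ 2 :=
  calc (inner ℂ (T x) x).re ≤ ‖T x‖ * ‖x‖ :=
        (Complex.re_le_norm _).trans (norm_inner_le_norm _ _)
    _ ≤ ‖T‖ * ‖x‖ * ‖x‖ := by gcongr; exact T.le_opNorm x
    _ = ‖T‖ * ‖x‖ ^ 2 := by ring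

variable [CompleteSpace E]

theorem hasDerivAt_exp_smul_apply (T : E →L[ℂ] E) (x : E) (s : ℝ) :
    HasDerivAt (fun u : ℝ => exp (u • T) x) (T (exp (s • T) x)) s := by
  have := ((ContinuousLinearMap.apply ℂ E x).restrictScalars ℝ).hasFDerivAt.comp_hasDerivAt s
    (hasDerivAt_exp_smul_const' (𝕂 := ℝ) T s)
  simpa [Function.comp_def] using this

theorem hasDerivAt_norm_sq_exp_smul_apply (T : E →L[ℂ] E) (x : E) (s : ℝ) :
    HasDerivAt (fun u : ℝ => ‖exp (u • T) x‖ ^ 2)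
      (2 * (inner ℂ (T (exp (s • T) x)) (exp (s • T) x)).re) s := by
  -- `HasDerivAt.norm_sq` is stated for real inner product spaces
  let _ := InnerProductSpace.rclikeToReal ℂ E
  have := (hasDerivAt_exp_smul_apply T x s).norm_sq
  rwa [real_inner_comm, real_inner_eq_re_inner] at this

theorem norm_exp_smul_le_of_re_inner_le (T : E →L[ℂ] E) {μ : ℝ}
    (hT : ∀ x, (inner ℂ (T x) x).re ≤ μ * ‖x‖ ^ 2) {t : ℝ} (ht : 0 ≤ t) :
    ‖exp (t • T)‖ ≤ Real.exp (μ * t) := by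
  refine ContinuousLinearMap.opNorm_le_bound _ (Real.exp_nonneg _) fun x => ?_
  have hderiv := hasDerivAt_norm_sq_exp_smul_apply T x
  have hgronwall := le_gronwallBound_of_liminf_deriv_right_le (δ := ‖x‖ ^ 2) (K := 2 * μ)
    (ε := 0) (a := 0) (b := t) (fun s _ => (hderiv s).continuousAt.continuousWithinAt)
    (fun s _ r hr => by
      simpa [slope_def_field, div_eq_inv_mul] using
        (hderiv s).hasDerivWithinAt.liminf_right_slope_le hr)
    (by simp) (fun s _ => by linarith [hT (exp (s • T) x)]) t ⟨ht, le_rfl⟩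
  rw [gronwallBound_ε0, sub_zero] at hgronwall
  refine (pow_le_pow_iff_left₀ (norm_nonneg _) (by positivity) two_ne_zero).1 ?_
  calc ‖exp (t • T) x‖ ^ 2 ≤ ‖x‖ ^ 2 * Real.exp (2 * μ * t) := hgronwall
    _ = (Real.exp (μ * t) * ‖x‖) ^ 2 := by rw [mul_pow, ← Real.exp_nat_mul]; ring_nf

end Dissipative

section Matrix

variable {n : Type*} [Fintype n]

theorem EuclideanSpace.norm_sq_eq_norm_re_sq_add_norm_im_sq (y : EuclideanSpace ℂ n) :
    ‖y‖ ^ 2 = ‖toLp 2 fun i => (y i).re‖ ^ 2 + ‖toLp 2 fun i => (y i).im‖ ^ 2 := by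
  simp only [EuclideanSpace.norm_sq_eq, ← Finset.sum_add_distrib, Complex.sq_norm,
    Complex.normSq_apply, Real.norm_eq_abs, sq_abs, ← sq]

variable [DecidableEq n]

theorem Matrix.l2_opNorm_map_ofReal_le (B : Matrix n n ℝ) : ‖B.map Complex.ofReal‖ ≤ ‖B‖ := by
  rw [cstar_norm_def]
  refine ContinuousLinearMap.opNorm_le_bound _ (norm_nonneg _) fun x => ?_
  set xRe : EuclideanSpace ℝ n := toLp 2 fun i => (x i).re
  set xIm : EuclideanSpace ℝ n := toLp 2 fun i => (x i).im
  have hre : (toLp 2 fun i => (toEuclideanCLM (𝕜 := ℂ) (B.map Complex.ofReal) x i).re) =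
      toEuclideanCLM (𝕜 := ℝ) B xRe := by
    ext i; simp [xRe, mulVec, dotProduct, Complex.re_sum]
  have him : (toLp 2 fun i => (toEuclideanCLM (𝕜 := ℂ) (B.map Complex.ofReal) x i).im) =
      toEuclideanCLM (𝕜 := ℝ) B xIm := by
    ext i; simp [xIm, mulVec, dotProduct, Complex.im_sum]
  refine (pow_le_pow_iff_left₀ (norm_nonneg _) (by positivity) two_ne_zero).1 ?_
  rw [EuclideanSpace.norm_sq_eq_norm_re_sq_add_norm_im_sq, hre, him, mul_pow,
    EuclideanSpace.norm_sq_eq_norm_re_sq_add_norm_im_sq x, mul_add, cstar_norm_def, ← mul_pow,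
    ← mul_pow]
  gcongr <;> exact ContinuousLinearMap.le_opNorm _ _

theorem Matrix.re_inner_toEuclideanCLM_diagonal_le {d : n → ℂ} {μ : ℝ} (hd : ∀ i, (d i).re ≤ μ)
    (x : EuclideanSpace ℂ n) :
    (inner ℂ (toEuclideanCLM (𝕜 := ℂ) (diagonal d) x) x).re ≤ μ * ‖x‖ ^ 2 := by
  have hsum : (inner ℂ (toEuclideanCLM (𝕜 := ℂ) (diagonal d) x) x).re =
      ∑ i, (d i).re * ‖x i‖ ^ 2 := by
    simp only [PiLp.inner_apply, ofLp_toEuclideanCLM, mulVec_diagonal, Complex.re_sum]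
    refine Finset.sum_congr rfl fun i _ => ?_
    rw [← smul_eq_mul, inner_smul_left, inner_self_eq_norm_sq_to_K, ← RCLike.ofReal_pow]
    exact Complex.re_mul_ofReal _ _
  rw [hsum, EuclideanSpace.norm_sq_eq, Finset.mul_sum]
  gcongr with i
  exact hd i

theorem Matrix.toEuclideanCLM_exp (M : Matrix n n ℂ) :
    toEuclideanCLM (n := n) (𝕜 := ℂ) (exp M) = exp (toEuclideanCLM (n := n) (𝕜 := ℂ) M) := by
  -- instance search does not find the `ℚ`-algebra structure that `map_exp` asks for
  let _ : NormedAlgebra ℚ (Matrix n n ℂ) := .restrictScalars ℚ ℂ _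
  exact map_exp _
    (AddMonoidHomClass.isometry_of_norm _ fun A => (cstar_norm_def A).symm).continuous M

theorem Matrix.norm_exp_real_smul (M : Matrix n n ℂ) (t : ℝ) :
    ‖exp (t • M)‖ = ‖exp (t • toEuclideanCLM (n := n) (𝕜 := ℂ) M)‖ := by
  rw [cstar_norm_def, toEuclideanCLM_exp, ← Complex.coe_smul, map_smul]
  rfl

theorem Matrix.norm_exp_smul_diagonal_add_map_ofReal_le {d : n → ℂ} {μ : ℝ}
    (hd : ∀ i, (d i).re ≤ μ) (B : Matrix n n ℝ) {t : ℝ} (ht : 0 ≤ t) :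
    ‖exp (t • (diagonal d + B.map Complex.ofReal))‖ ≤ Real.exp ((μ + ‖B‖) * t) := by
  rw [norm_exp_real_smul]
  refine norm_exp_smul_le_of_re_inner_le _ (fun x => ?_) ht
  rw [map_add, _root_.add_apply, inner_add_left, Complex.add_re, add_mul]
  refine add_le_add (re_inner_toEuclideanCLM_diagonal_le hd x)
    ((re_inner_le_opNorm_mul_sq _ x).trans ?_)
  gcongr
  exact l2_opNorm_map_ofReal_le B

end Matrix

theorem Real.min_rpow_le_rpow {x r₁ r r₂ : ℝ} (hx : 0 ≤ x) (hr : 0 ≤ r) (hr₁ : r₁ ≤ r)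
    (hr₂ : r ≤ r₂) : min (x ^ r₁) (x ^ r₂) ≤ x ^ r := by
  rcases le_total 1 x with h1 | h1
  · exact (min_le_left _ _).trans (rpow_le_rpow_of_exponent_le h1 hr₁)
  · exact (min_le_right _ _).trans (rpow_le_rpow_of_exponent_ge' hx h1 hr hr₂)

theorem Complex.min_rpow_mul_cos_le_re_cpow (z : ℂ) {r₁ r r₂ : ℝ} (hr : 0 ≤ r) (hr₁ : r₁ ≤ r)
    (hr₂ : r ≤ r₂) (harg : 0 ≤ z.arg) (hangle : r₂ * z.arg ≤ Real.pi / 2) :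
    min (‖z‖ ^ r₁) (‖z‖ ^ r₂) * Real.cos (r₂ * z.arg) ≤ (z ^ (r : ℂ)).re := by
  have hr₂θ : 0 ≤ r₂ * z.arg := mul_nonneg (hr.trans hr₂) harg
  rw [cpow_ofReal_re, mul_comm z.arg]
  refine mul_le_mul (Real.min_rpow_le_rpow (norm_nonneg z) hr hr₁ hr₂) ?_
    (Real.cos_nonneg_of_mem_Icc ⟨by linarith [Real.pi_pos], hangle⟩) (by positivity)
  exact Real.cos_le_cos_of_nonneg_of_le_pi (mul_nonneg hr harg) (by linarith [Real.pi_pos])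
    (by gcongr)

theorem Real.exp_sub_min_mul_le_exp_add_exp (K x y c t : ℝ) :
    exp ((K - min x y * c) * t) ≤ exp ((K - y * c) * t) + exp ((K - x * c) * t) := by
  rcases min_choice x y with h | h <;> rw [h] <;>
    linarith [exp_pos ((K - x * c) * t), exp_pos ((K - y * c) * t)]

theorem semigroup_norm_estimate (m : ℕ) (hm : 0 < m) (α : Fin m → ℝ)
    (hα : ∀ i, α i ∈ Set.Ioc (0:ℝ) 1)
    (hmono : ∀ i j : Fin m, i ≤ j → α j ≤ α i)
    (B : Matrix (Fin m) (Fin m) ℝ) (z : ℂ) (hz : 0 ≤ z.arg)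
    (hz' : z.arg < Real.pi / (4 * α ⟨0, hm⟩)) (t : ℝ) (ht : 0 ≤ t) :
    ‖NormedSpace.exp
        (t • (Matrix.diagonal (fun i => -z ^ (((2 * α i : ℝ)) : ℂ)) +
          B.map Complex.ofReal))‖ ≤
      Real.exp ((‖B‖ - ‖z‖ ^ (2 * α ⟨0, hm⟩) *
            Real.cos (2 * α ⟨0, hm⟩ * z.arg)) * t) +
        Real.exp ((‖B‖ - ‖z‖ ^ (2 * α ⟨m - 1, Nat.sub_lt hm one_pos⟩) *
            Real.cos (2 * α ⟨0, hm⟩ * z.arg)) * t) := by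
  set a := α ⟨0, hm⟩
  set b := α ⟨m - 1, Nat.sub_lt hm one_pos⟩
  set κ := min (‖z‖ ^ (2 * b)) (‖z‖ ^ (2 * a)) * Real.cos (2 * a * z.arg)
  have hangle : 2 * a * z.arg ≤ Real.pi / 2 := by
    have ha : 0 < a := (hα _).1
    rw [lt_div_iff₀ (by positivity)] at hz'
    linarith
  have hre (i : Fin m) : (-z ^ ((2 * α i : ℝ) : ℂ)).re ≤ -κ := by
    refine neg_le_neg (Complex.min_rpow_mul_cos_le_re_cpow z (by linarith [(hα i).1]) ?_ ?_ hz
      hangle)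
    · exact mul_le_mul_of_nonneg_left (hmono _ _ (Fin.le_def.2 (Nat.le_sub_one_of_lt i.2)))
        two_pos.le
    · exact mul_le_mul_of_nonneg_left (hmono _ _ (Fin.le_def.2 (Nat.zero_le _))) two_pos.le
  calc _ ≤ Real.exp ((-κ + ‖B‖) * t) := norm_exp_smul_diagonal_add_map_ofReal_le hre B ht
    _ ≤ _ := by rw [neg_add_eq_sub]; exact Real.exp_sub_min_mul_le_exp_add_exp _ _ _ _ _
end

section
/- Let d ≥ 1, α ∈ (0,1), B > 0, and suppose p : ℝᵈ → ℝ satisfies p(y) ≥ B⁻¹ t / (t^{d/(2α)+1} + |y|^{d+2α}) for all y ∈ ℝᵈ, where t ≥ 1 is fixed. Let u₀ : ℝᵈ → ℝ be continuous, nonnegative, and satisfy u₀(y) ≥ C₀ > 0 for all y in some ball B_R(ξ). Then there exists a constant c' > 0 (depending on C₀, R, ξ, B, d, α but not on t ≥ 1 or x) such that the convolution satisfies (p ∗ u₀)(x) ≥ c' t / (t^{d/(2α)+1} + |x|^{d+2α}) for all x ∈ ℝᵈ. -/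
/-!
On the ball `B_R(ξ)` the datum is at least `C₀`, and for `y` in that ball `‖x - y‖ ≤ ‖x‖ + M`
with `M = ‖ξ‖ + R`. Since `(r + M)^β ≤ 2^β (r^β + M^β)` and `t^γ ≥ 1`, the kernel profile
`t / (t^γ + ‖x - y‖^β)` is at least the profile at `x` divided by `K = 2^β (1 + M^β)`, a constant
independent of `t` and `x`. Integrating over the ball gives the bound with
`c' = C₀ B⁻¹ |B_R(ξ)| / K`.
-/

open MeasureTheory Metric

lemma Real.add_rpow_le_two_rpow_mul_rpow_add_rpow {a b p : ℝ} (ha : 0 ≤ a) (hb : 0 ≤ b)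
    (hp : 0 ≤ p) : (a + b) ^ p ≤ 2 ^ p * (a ^ p + b ^ p) := calc
  (a + b) ^ p ≤ (2 * max a b) ^ p := by rw [two_mul]; gcongr <;> simp
  _ = 2 ^ p * (max a b) ^ p := Real.mul_rpow zero_le_two (le_max_of_le_left ha)
  _ ≤ 2 ^ p * (a ^ p + b ^ p) := by
    gcongr
    rcases max_cases a b with ⟨h, -⟩ | ⟨h, -⟩ <;> rw [h] <;> simp [Real.rpow_nonneg, *]

lemma add_rpow_add_le_mul_add_rpow {s r M β : ℝ} (hs : 1 ≤ s) (hr : 0 ≤ r) (hM : 0 ≤ M)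
    (hβ : 0 ≤ β) : s + (r + M) ^ β ≤ 2 ^ β * (1 + M ^ β) * (s + r ^ β) := by
  have h2 : 1 ≤ (2 : ℝ) ^ β := Real.one_le_rpow one_le_two hβ
  have hMβ : 0 ≤ M ^ β := Real.rpow_nonneg hM β
  have hrβ : 0 ≤ r ^ β := Real.rpow_nonneg hr β
  have := Real.add_rpow_le_two_rpow_mul_rpow_add_rpow hr hM hβ
  nlinarith [mul_le_mul_of_nonneg_left hs (mul_nonneg (by positivity : (0:ℝ) ≤ 2 ^ β) hMβ),
    mul_nonneg (mul_nonneg (by positivity : (0:ℝ) ≤ 2 ^ β) hMβ) hrβ]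

lemma div_add_rpow_norm_le_of_norm_le_add {E : Type*} [SeminormedAddCommGroup E] {x z : E}
    {s c M β : ℝ} (hs : 1 ≤ s) (hc : 0 ≤ c) (hM : 0 ≤ M) (hβ : 0 ≤ β) (hz : ‖z‖ ≤ ‖x‖ + M) :
    c / (2 ^ β * (1 + M ^ β) * (s + ‖x‖ ^ β)) ≤ c / (s + ‖z‖ ^ β) := by
  refine div_le_div_of_nonneg_left hc (by positivity) ?_
  calc s + ‖z‖ ^ β ≤ s + (‖x‖ + M) ^ β := by gcongr
    _ ≤ _ := add_rpow_add_le_mul_add_rpow hs (norm_nonneg x) hM hβ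

lemma norm_sub_le_norm_add_of_mem_ball {E : Type*} [SeminormedAddCommGroup E] {x y ξ : E}
    {R : ℝ} (hy : y ∈ ball ξ R) : ‖x - y‖ ≤ ‖x‖ + (‖ξ‖ + R) := by
  have := norm_le_of_mem_closedBall (ball_subset_closedBall hy)
  linarith [norm_sub_le x y]

lemma mul_measureReal_le_integral_of_forall_le {X : Type*} [MeasurableSpace X] {μ : Measure X}
    {f : X → ℝ} {s : Set X} {c : ℝ} (hs : MeasurableSet s) (hμs : μ s ≠ ⊤)
    (hf : Integrable f μ) (hf0 : 0 ≤ f) (hc : ∀ x ∈ s, c ≤ f x) :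
    c * μ.real s ≤ ∫ x, f x ∂μ :=
  (setIntegral_ge_of_const_le_real hs hμs hc hf.integrableOn).trans
    (setIntegral_le_integral hf (.of_forall hf0))

theorem convolution_algebraic_lower_bound_general (d : ℕ) (α B R C₀ : ℝ)
    (hα : α ∈ Set.Ioo (0:ℝ) 1) (hB : 0 < B) (hR : 0 < R) (hC₀ : 0 < C₀)
    (ξ : EuclideanSpace ℝ (Fin d)) (u₀ : EuclideanSpace ℝ (Fin d) → ℝ)
    (hu₀0 : ∀ y, 0 ≤ u₀ y)
    (hu₀ : ∀ y ∈ Metric.ball ξ R, C₀ ≤ u₀ y) :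
    ∃ c' > (0:ℝ), ∀ t ≥ (1:ℝ), ∀ p : EuclideanSpace ℝ (Fin d) → ℝ,
      (∀ y, B⁻¹ * t / (t ^ ((d:ℝ) / (2 * α) + 1) + ‖y‖ ^ ((d:ℝ) + 2 * α)) ≤ p y) →
      (∀ x, Integrable (fun y => p (x - y) * u₀ y)) →
      ∀ x, c' * t / (t ^ ((d:ℝ) / (2 * α) + 1) + ‖x‖ ^ ((d:ℝ) + 2 * α)) ≤
        ∫ y, p (x - y) * u₀ y := by
  obtain ⟨hα0, -⟩ := hα
  set γ : ℝ := (d:ℝ) / (2 * α) + 1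
  set β : ℝ := (d:ℝ) + 2 * α
  have hβ : 0 ≤ β := by positivity
  set K := 2 ^ β * (1 + (‖ξ‖ + R) ^ β)
  have hV : 0 < volume.real (ball ξ R) :=
    ENNReal.toReal_pos (measure_ball_pos volume ξ hR).ne' measure_ball_lt_top.ne
  refine ⟨C₀ * B⁻¹ * volume.real (ball ξ R) / K, by positivity, fun t ht p hp hint x => ?_⟩
  have ht0 : 0 < t := one_pos.trans_le ht
  have htγ : 1 ≤ t ^ γ := Real.one_le_rpow ht (by positivity)
  have hp0 : ∀ z, 0 ≤ p z := fun z => le_trans (by positivity) (hp z)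
  have hpt : ∀ y ∈ ball ξ R, C₀ * (B⁻¹ * t / (K * (t ^ γ + ‖x‖ ^ β))) ≤ p (x - y) * u₀ y := by
    intro y hy
    have hpy : B⁻¹ * t / (K * (t ^ γ + ‖x‖ ^ β)) ≤ p (x - y) :=
      (div_add_rpow_norm_le_of_norm_le_add htγ (by positivity) (by positivity) hβ
        (norm_sub_le_norm_add_of_mem_ball hy)).trans (hp _)
    rw [mul_comm]
    exact mul_le_mul hpy (hu₀ y hy) hC₀.le (hp0 _)
  calc C₀ * B⁻¹ * volume.real (ball ξ R) / K * t / (t ^ γ + ‖x‖ ^ β)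
      = C₀ * (B⁻¹ * t / (K * (t ^ γ + ‖x‖ ^ β))) * volume.real (ball ξ R) := by field_simp
    _ ≤ ∫ y, p (x - y) * u₀ y :=
      mul_measureReal_le_integral_of_forall_le measurableSet_ball measure_ball_lt_top.ne
        (hint x) (fun y => mul_nonneg (hp0 _) (hu₀0 y)) hpt

theorem convolution_algebraic_lower_bound (d : ℕ) (hd : 1 ≤ d) (α B R C₀ : ℝ)
    (hα : α ∈ Set.Ioo (0:ℝ) 1) (hB : 0 < B) (hR : 0 < R) (hC₀ : 0 < C₀)
    (ξ : EuclideanSpace ℝ (Fin d)) (u₀ : EuclideanSpace ℝ (Fin d) → ℝ)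
    (hu₀c : Continuous u₀) (hu₀0 : ∀ y, 0 ≤ u₀ y)
    (hu₀ : ∀ y ∈ Metric.ball ξ R, C₀ ≤ u₀ y) :
    ∃ c' > (0:ℝ), ∀ t ≥ (1:ℝ), ∀ p : EuclideanSpace ℝ (Fin d) → ℝ,
      (∀ y, B⁻¹ * t / (t ^ ((d:ℝ) / (2 * α) + 1) + ‖y‖ ^ ((d:ℝ) + 2 * α)) ≤ p y) →
      (∀ x, Integrable (fun y => p (x - y) * u₀ y)) →
      ∀ x, c' * t / (t ^ ((d:ℝ) / (2 * α) + 1) + ‖x‖ ^ ((d:ℝ) + 2 * α)) ≤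
        ∫ y, p (x - y) * u₀ y :=
  convolution_algebraic_lower_bound_general d α B R C₀ hα hB hR hC₀ ξ u₀ hu₀0 hu₀
end
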